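/- Let ε ∈ {0, 1} and let v₀, w_{m₀}, L₀, h₀ be real numbers with v₀ > 0, w_{m₀} > 0, L₀ > 0, h₀ > 0 and v₀ > ε·w_{m₀}, and let γᵉ > 0 be the unique positive real number satisfying (2·v₀·h₀ − L₀·γᵉ)·exp(−(γᵉ)²) = (w_{m₀} + L₀·(γᵉ)²)·(√π·erf(γᵉ) + 2·h₀·ε). Define sᵉ(t) := 2·γᵉ·√t for t ≥ 0 and, for 0 ≤ z ≤ sᵉ(t), t > 0, wᵉ(z,t) := (2·√t·(2·h₀·v₀ − L₀·γᵉ)/(√π·erf(γᵉ) + 2·h₀·ε))·[exp(−z²/(4t)) + (z·√π/(2·√t))·erf(z/(2·√t))] − z·(2·L₀·γᵉ·h₀·ε + 2·h₀·v₀·√π·erf(γᵉ))/(√π·erf(γᵉ) + 2·h₀·ε). Then for all t > 0: (i) ∂²wᵉ/∂z²(z,t) = ∂wᵉ/∂t(z,t) for all 0 < z < sᵉ(t); (ii) ∂wᵉ/∂z(sᵉ(t),t) = −L₀·√t·(sᵉ)'(t); (iii) wᵉ(sᵉ(t),t) = 2·w_{m₀}·√t; (iv) ∂wᵉ/∂z(0,t)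 = (h₀/√t)·(ε·wᵉ(0,t) − 2·v₀·√t); and (v) sᵉ(0) = 0. -/

import Mathlib

/-!
On lines `z = 2ξ√t`, `w` is a combination of `z` and of the similarity solution `√t · Φ(ξ)`,
`Φ ξ = exp (-ξ²) + √π ξ erf ξ`, of the heat equation: since `Φ' = √π erf` and `Φ'' = 2 exp (-ξ²)`,
both `∂²/∂z²` and `∂/∂t` of `√t · Φ(ξ)` equal `exp (-ξ²) / (2√t)`. On the free boundary
`s t = 2γ√t` one has `ξ = γ`, so the boundary conditions become algebraic identities in `γ`; the
temperature condition on the free boundary is exactly the equation defining `γ`.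
-/

open Real MeasureTheory Set

noncomputable section

/-- The error function `erf x = (2/√π) ∫₀ˣ exp(−u²) du`. -/
def erf (x : ℝ) : ℝ := (2 / Real.sqrt π) * ∫ u in (0:ℝ)..x, Real.exp (-u ^ 2)

/-- Partial derivative in the first (space) variable. -/
def pz (f : ℝ → ℝ → ℝ) (z t : ℝ) : ℝ := deriv (fun z' => f z' t) z

/-- Partial derivative in the second (time) variable. -/
def pt (f : ℝ → ℝ → ℝ) (z t : ℝ) : ℝ := deriv (fun t' => f z t') t

/-- Second partial derivative in the first (space) variable. -/
def pzz (f : ℝ → ℝ → ℝ) (z t : ℝ) : ℝ := deriv (fun z' => pz f z' t) z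

theorem hasDerivAt_erf (x : ℝ) : HasDerivAt erf (2 / √π * exp (-x ^ 2)) x :=
  ((by fun_prop : Continuous fun u : ℝ => exp (-u ^ 2)).integral_hasStrictDerivAt 0 x
    |>.hasDerivAt).const_mul _

@[simp]
theorem erf_zero : erf 0 = 0 := by simp [erf]

theorem erf_pos {x : ℝ} (hx : 0 < x) : 0 < erf x :=
  mul_pos (by positivity)
    (intervalIntegral.intervalIntegral_pos_of_pos
      ((by fun_prop : Continuous fun u : ℝ => exp (-u ^ 2)).intervalIntegrable _ _)
      (fun _ => exp_pos _) hx)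

theorem neg_sq_div_two_sqrt {t : ℝ} (ht : 0 ≤ t) (z : ℝ) :
    -(z / (2 * √t)) ^ 2 = -z ^ 2 / (4 * t) := by
  rw [div_pow, mul_pow, sq_sqrt ht]
  ring

theorem hasDerivAt_erf_div_two_sqrt {t : ℝ} (ht : 0 < t) (z : ℝ) :
    HasDerivAt (fun z : ℝ => erf (z / (2 * √t)))
      (2 / √π * exp (-z ^ 2 / (4 * t)) * (1 / (2 * √t))) z := by
  rw [← neg_sq_div_two_sqrt ht.le]
  exact (hasDerivAt_erf _).comp z (by simpa using (hasDerivAt_id z).div_const (2 * √t))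

/-- `√t · Φ(z / (2√t))` with `Φ ξ = exp (-ξ²) + √π ξ erf ξ`. -/
def heatProfile (z t : ℝ) : ℝ := √t * exp (-z ^ 2 / (4 * t)) + z * √π / 2 * erf (z / (2 * √t))

theorem hasDerivAt_heatProfile_space {t : ℝ} (ht : 0 < t) (z : ℝ) :
    HasDerivAt (fun z => heatProfile z t) (√π / 2 * erf (z / (2 * √t))) z := by
  have hexp : HasDerivAt (fun z : ℝ => exp (-z ^ 2 / (4 * t)))
      (exp (-z ^ 2 / (4 * t)) * (-(2 * z) / (4 * t))) z := by
    simpa using ((hasDerivAt_pow 2 z).neg.div_const (4 * t)).exp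
  have herf := hasDerivAt_erf_div_two_sqrt ht z
  have hlin : HasDerivAt (fun z : ℝ => z * √π / 2) (√π / 2) z := by
    simpa using ((hasDerivAt_id z).mul_const √π).div_const 2
  refine ((hexp.const_mul √t).add (hlin.mul herf)).congr_deriv ?_
  -- `field_simp` cannot clear `√t` against `t`, so make `t` the square of a fresh variable.
  have htr : t = √t ^ 2 := (sq_sqrt ht.le).symm
  generalize √t = r at *
  subst htr
  field_simp
  ring

theorem hasDerivAt_heatProfile_time {t : ℝ} (ht : 0 < t) (z : ℝ) :
    HasDerivAt (fun t => heatProfile z t) (exp (-z ^ 2 / (4 * t)) / (2 * √t)) t := by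
  have hrt : 0 < √t := sqrt_pos.2 ht
  have hsqrt : HasDerivAt sqrt (1 / (2 * √t)) t := by
    simpa using hasDerivAt_sqrt ht.ne'
  have hexp : HasDerivAt (fun t : ℝ => exp (-z ^ 2 / (4 * t)))
      (exp (-z ^ 2 / (4 * t)) * (z ^ 2 * 4 / (4 * t) ^ 2)) t := by
    have := ((hasDerivAt_const t (-z ^ 2)).div
      ((hasDerivAt_id t).const_mul 4) (by positivity)).exp
    simpa using this
  have herf : HasDerivAt (fun t : ℝ => erf (z / (2 * √t)))
      (2 / √π * exp (-z ^ 2 / (4 * t)) *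
        ((0 * (2 * √t) - z * (2 * (1 / (2 * √t)))) / (2 * √t) ^ 2)) t := by
    rw [← neg_sq_div_two_sqrt ht.le]
    have := (hasDerivAt_const t z).fun_div (hsqrt.const_mul 2) (by positivity)
    exact (hasDerivAt_erf _).comp t this
  refine ((hsqrt.mul hexp).add (herf.const_mul (z * √π / 2))).congr_deriv ?_
  have htr : t = √t ^ 2 := (sq_sqrt ht.le).symm
  generalize √t = r at *
  subst htr
  field_simp
  ring

theorem pz_eq_of_eq_heatProfile {w : ℝ → ℝ → ℝ} {A B t : ℝ}
    (hw : ∀ z, w z t = A * heatProfile z t - B * z) (ht : 0 < t) (z : ℝ) :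
    pz w z t = A * (√π / 2 * erf (z / (2 * √t))) - B := by
  rw [pz, funext hw]
  exact (((hasDerivAt_heatProfile_space ht z).const_mul A).sub
    ((hasDerivAt_id' z).const_mul B)).deriv.trans (by ring)

theorem pzz_eq_pt_of_eq_heatProfile {w : ℝ → ℝ → ℝ} {A B : ℝ}
    (hw : ∀ t > 0, ∀ z, w z t = A * heatProfile z t - B * z) {t : ℝ} (ht : 0 < t) (z : ℝ) :
    pzz w z t = pt w z t := by
  have hpzz : pzz w z t = A * (√π / 2 * (2 / √π * exp (-z ^ 2 / (4 * t)) * (1 / (2 * √t)))) := by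
    rw [pzz, funext (pz_eq_of_eq_heatProfile (hw t ht) ht)]
    exact (((hasDerivAt_erf_div_two_sqrt ht z).const_mul _).const_mul A).sub_const B |>.deriv
  have hpt : pt w z t = A * (exp (-z ^ 2 / (4 * t)) / (2 * √t)) := by
    have hev : (fun t' => w z t') =ᶠ[nhds t] fun t' => A * heatProfile z t' - B * z :=
      (eventually_gt_nhds ht).mono fun t' ht' => hw t' ht' z
    rw [pt, hev.deriv_eq]
    exact ((hasDerivAt_heatProfile_time ht z).const_mul A).sub_const (B * z) |>.deriv
  rw [hpzz, hpt]
  field_simp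

theorem statement12_general (ε v₀ wm₀ L₀ h₀ : ℝ) (hε : ε = 0 ∨ ε = 1)
    (h4 : 0 < h₀)
    (γ : ℝ) (hγ_pos : 0 < γ)
    (hγ : (2 * v₀ * h₀ - L₀ * γ) * Real.exp (-γ ^ 2) =
      (wm₀ + L₀ * γ ^ 2) * (Real.sqrt π * erf γ + 2 * h₀ * ε))
    (s : ℝ → ℝ) (hs : ∀ t, s t = 2 * γ * Real.sqrt t)
    (w : ℝ → ℝ → ℝ)
    (hw : ∀ t > 0, ∀ z : ℝ,
      w z t = (2 * Real.sqrt t * (2 * h₀ * v₀ - L₀ * γ) /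
          (Real.sqrt π * erf γ + 2 * h₀ * ε)) *
          (Real.exp (-z ^ 2 / (4 * t)) +
            (z * Real.sqrt π / (2 * Real.sqrt t)) * erf (z / (2 * Real.sqrt t))) -
        z * ((2 * L₀ * γ * h₀ * ε + 2 * h₀ * v₀ * Real.sqrt π * erf γ) /
          (Real.sqrt π * erf γ + 2 * h₀ * ε))) :
    (∀ t > 0,
      (∀ z, 0 < z → z < s t → pzz w z t = pt w z t) ∧
      pz w (s t) t = -L₀ * Real.sqrt t * deriv s t ∧
      w (s t) t = 2 * wm₀ * Real.sqrt t ∧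
      pz w 0 t = (h₀ / Real.sqrt t) * (ε * w 0 t - 2 * v₀ * Real.sqrt t)) ∧
    s 0 = 0 := by
  have hπ : 0 < √π := sqrt_pos.2 pi_pos
  have hD : 0 < √π * erf γ + 2 * h₀ * ε := by
    have := mul_pos hπ (erf_pos hγ_pos)
    rcases hε with rfl | rfl <;> linarith
  set D := √π * erf γ + 2 * h₀ * ε
  set A := 2 * (2 * h₀ * v₀ - L₀ * γ) / D with hA
  set B := (2 * L₀ * γ * h₀ * ε + 2 * h₀ * v₀ * √π * erf γ) / D with hB
  have hwA : ∀ t > 0, ∀ z, w z t = A * heatProfile z t - B * z := by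
    intro t ht z
    rw [hw t ht z, heatProfile, hA]
    field_simp
  refine ⟨fun t ht => ?_, by simp [hs]⟩
  have hst : s t / (2 * √t) = γ := by
    rw [hs]
    field_simp [(sqrt_pos.2 ht).ne']
  have hpz := pz_eq_of_eq_heatProfile (hwA t ht) ht
  refine ⟨fun z _ _ => pzz_eq_pt_of_eq_heatProfile hwA ht z, ?_, ?_, ?_⟩
  · have hs' : deriv s t = γ / √t := by
      rw [funext hs, ((hasDerivAt_sqrt ht.ne').const_mul (2 * γ)).deriv]
      field_simp
    rw [hpz, hst, hs', hA, hB]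
    field_simp
    ring
  · rw [hwA t ht, heatProfile, ← neg_sq_div_two_sqrt ht.le, hst, hs, hA, hB]
    field_simp
    linear_combination hγ
  · rw [hpz, hwA t ht, heatProfile, hA, hB]
    norm_num
    field_simp
    ring

/-- the explicit similarity solution of the Stefan problem with
Robin (`ε = 1`) or Neumann (`ε = 0`) condition at the fixed face. -/
theorem statement12 (ε v₀ wm₀ L₀ h₀ : ℝ) (hε : ε = 0 ∨ ε = 1)
    (h1 : 0 < v₀) (h2 : 0 < wm₀) (h3 : 0 < L₀) (h4 : 0 < h₀)
    (h5 : ε * wm₀ < v₀)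
    (γ : ℝ) (hγ_pos : 0 < γ)
    (hγ : (2 * v₀ * h₀ - L₀ * γ) * Real.exp (-γ ^ 2) =
      (wm₀ + L₀ * γ ^ 2) * (Real.sqrt π * erf γ + 2 * h₀ * ε))
    (hγ_uniq : ∀ γ' : ℝ, 0 < γ' →
      (2 * v₀ * h₀ - L₀ * γ') * Real.exp (-γ' ^ 2) =
        (wm₀ + L₀ * γ' ^ 2) * (Real.sqrt π * erf γ' + 2 * h₀ * ε) → γ' = γ)
    (s : ℝ → ℝ) (hs : ∀ t, s t = 2 * γ * Real.sqrt t)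
    (w : ℝ → ℝ → ℝ)
    (hw : ∀ t > 0, ∀ z : ℝ,
      w z t = (2 * Real.sqrt t * (2 * h₀ * v₀ - L₀ * γ) /
          (Real.sqrt π * erf γ + 2 * h₀ * ε)) *
          (Real.exp (-z ^ 2 / (4 * t)) +
            (z * Real.sqrt π / (2 * Real.sqrt t)) * erf (z / (2 * Real.sqrt t))) -
        z * ((2 * L₀ * γ * h₀ * ε + 2 * h₀ * v₀ * Real.sqrt π * erf γ) /
          (Real.sqrt π * erf γ + 2 * h₀ * ε))) :
    (∀ t > 0,
      (∀ z, 0 < z → z < s t → pzz w z t = pt w z t) ∧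
      pz w (s t) t = -L₀ * Real.sqrt t * deriv s t ∧
      w (s t) t = 2 * wm₀ * Real.sqrt t ∧
      pz w 0 t = (h₀ / Real.sqrt t) * (ε * w 0 t - 2 * v₀ * Real.sqrt t)) ∧
    s 0 = 0 :=
  statement12_general ε v₀ wm₀ L₀ h₀ hε h4 γ hγ_pos hγ s hs w hw

end
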